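/- Let α > 1, 0 < β < 1, and M > 1 be real numbers. Then the two-dimensional Lebesgue measure of the set { (x, y) ∈ (0,1) × (0,1) : β·x / (α·x + y)² > M } equals β² / (6·α³·M²). -/

import Mathlib

open Set MeasureTheory

/-!
Clearing the denominator, `β x / (α x + y)² > M` says `α x + y < a √x` with `a = √(β / M)`.
For `a ≤ α` and `a² ≤ 4α` the constraints `x < 1`, `y < 1` are then automatic, so the region is
the part of the quadrant below the graph of `a √x - α x`, which is positive exactly on
`(0, (a / α)²)`. Its area is `∫₀^{(a/α)²} (a √x - α x) dx = a⁴ / (6 α³) = β² / (6 α³ M²)`.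
-/

theorem integral_sqrt_of_nonneg {c : ℝ} (hc : 0 ≤ c) :
    ∫ x in (0 : ℝ)..c, √x = 2 / 3 * c * √c := by
  have hrpow : ∫ x in (0 : ℝ)..c, √x = ∫ x in (0 : ℝ)..c, x ^ (1 / 2 : ℝ) :=
    intervalIntegral.integral_congr fun x _ => Real.sqrt_eq_rpow x
  rw [hrpow, integral_rpow (Or.inl (by norm_num)), Real.zero_rpow (by norm_num),
    show (1 / 2 : ℝ) + 1 = 1 + 1 / 2 by norm_num, Real.rpow_add' hc (by norm_num),
    Real.rpow_one, ← Real.sqrt_eq_rpow]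
  ring

theorem integral_mul_sqrt_sub_mul {a α : ℝ} (ha : 0 ≤ a) (hα : 0 < α) :
    ∫ x in (0 : ℝ)..(a / α) ^ 2, (a * √x - α * x) = a ^ 4 / (6 * α ^ 3) := by
  have hsqrt_int : IntervalIntegrable (fun x => a * √x) volume 0 ((a / α) ^ 2) :=
    (continuous_const.mul Real.continuous_sqrt).intervalIntegrable _ _
  have hlin_int : IntervalIntegrable (fun x => α * x) volume 0 ((a / α) ^ 2) :=
    (continuous_const.mul continuous_id).intervalIntegrable _ _
  rw [intervalIntegral.integral_sub hsqrt_int hlin_int, intervalIntegral.integral_const_mul,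
    intervalIntegral.integral_const_mul, integral_sqrt_of_nonneg (sq_nonneg _), integral_id,
    Real.sqrt_sq (by positivity)]
  field_simp
  ring

theorem mul_sqrt_sub_mul_le {a α x : ℝ} (hα : 0 < α) (hx : 0 ≤ x) :
    a * √x - α * x ≤ a ^ 2 / (4 * α) := by
  rw [le_div_iff₀ (by positivity)]
  nth_rw 2 [← Real.sq_sqrt hx]
  nlinarith [sq_nonneg (a - 2 * α * √x)]

theorem mul_sqrt_sub_mul_pos_iff {a α x : ℝ} (ha : 0 ≤ a) (hα : 0 < α) (hx : 0 < x) :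
    0 < a * √x - α * x ↔ x < (a / α) ^ 2 := by
  rw [sub_pos, ← Real.sqrt_lt_sqrt_iff hx.le, Real.sqrt_sq (by positivity), lt_div_iff₀ hα,
    show α * x = √x * α * √x by rw [mul_right_comm, Real.mul_self_sqrt hx.le, mul_comm],
    mul_lt_mul_iff_of_pos_right (Real.sqrt_pos.2 hx)]

theorem setOf_add_lt_mul_sqrt_eq_regionBetween {a α : ℝ} (ha : 0 ≤ a) (hα : 0 < α) (haα : a ≤ α)
    (ha4 : a ^ 2 ≤ 4 * α) :
    {p : ℝ × ℝ | p.1 ∈ Ioo (0 : ℝ) 1 ∧ p.2 ∈ Ioo (0 : ℝ) 1 ∧ α * p.1 + p.2 < a * √p.1} =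
      regionBetween (fun _ => 0) (fun x => a * √x - α * x) (Ioo 0 ((a / α) ^ 2)) := by
  ext ⟨x, y⟩
  simp only [regionBetween, mem_ofPred_eq, mem_Ioo]
  constructor
  · rintro ⟨⟨hx0, -⟩, ⟨hy0, -⟩, hlt⟩
    exact ⟨⟨hx0, (mul_sqrt_sub_mul_pos_iff ha hα hx0).1 (by linarith)⟩, hy0, by linarith⟩
  · rintro ⟨⟨hx0, hxc⟩, hy0, hyg⟩
    have hc1 : (a / α) ^ 2 ≤ 1 := pow_le_one₀ (by positivity) ((div_le_one hα).2 haα)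
    have hg1 : a * √x - α * x ≤ 1 :=
      (mul_sqrt_sub_mul_le hα hx0.le).trans ((div_le_one (by positivity)).2 ha4)
    exact ⟨⟨hx0, by linarith⟩, ⟨hy0, by linarith⟩, by linarith⟩

theorem volume_setOf_add_lt_mul_sqrt {a α : ℝ} (ha : 0 ≤ a) (hα : 0 < α) (haα : a ≤ α)
    (ha4 : a ^ 2 ≤ 4 * α) :
    volume {p : ℝ × ℝ | p.1 ∈ Ioo (0 : ℝ) 1 ∧ p.2 ∈ Ioo (0 : ℝ) 1 ∧
        α * p.1 + p.2 < a * √p.1} = ENNReal.ofReal (a ^ 4 / (6 * α ^ 3)) := by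
  have hg : Continuous fun x => a * √x - α * x := by fun_prop
  rw [setOf_add_lt_mul_sqrt_eq_regionBetween ha hα haα ha4, Measure.volume_eq_prod,
    volume_regionBetween_eq_integral integrableOn_zero
      (hg.integrableOn_Icc.mono_set Ioo_subset_Icc_self) measurableSet_Ioo
      fun x hx => ?_]
  · simp only [Pi.sub_apply, sub_zero]
    rw [← integral_Ioc_eq_integral_Ioo, ← intervalIntegral.integral_of_le (sq_nonneg _),
      integral_mul_sqrt_sub_mul ha hα]
  · exact ((mul_sqrt_sub_mul_pos_iff ha hα hx.1).2 hx.2).le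

theorem lt_div_sq_iff_lt_sqrt_mul_sqrt {M β x d : ℝ} (hM : 0 < M) (hx : 0 ≤ x) (hd : 0 < d) :
    M < β * x / d ^ 2 ↔ d < √(β / M) * √x := by
  rw [← Real.sqrt_mul' _ hx, Real.lt_sqrt hd.le, lt_div_iff₀ (by positivity), div_mul_eq_mul_div,
    lt_div_iff₀ hM, mul_comm]

theorem stmt_15 (α β M : ℝ) (hα : 1 < α) (hβ0 : 0 < β) (hβ1 : β < 1) (hM : 1 < M) :
    volume {p : ℝ × ℝ | p.1 ∈ Ioo (0 : ℝ) 1 ∧ p.2 ∈ Ioo (0 : ℝ) 1 ∧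
        β * p.1 / (α * p.1 + p.2) ^ 2 > M} =
      ENNReal.ofReal (β ^ 2 / (6 * α ^ 3 * M ^ 2)) := by
  have hM0 : 0 < M := by linarith
  have hβM : β / M < 1 := (div_lt_one hM0).2 (by linarith)
  have ha2 : √(β / M) ^ 2 = β / M := Real.sq_sqrt (by positivity)
  have hset : {p : ℝ × ℝ | p.1 ∈ Ioo (0 : ℝ) 1 ∧ p.2 ∈ Ioo (0 : ℝ) 1 ∧
        β * p.1 / (α * p.1 + p.2) ^ 2 > M} =
      {p : ℝ × ℝ | p.1 ∈ Ioo (0 : ℝ) 1 ∧ p.2 ∈ Ioo (0 : ℝ) 1 ∧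
        α * p.1 + p.2 < √(β / M) * √p.1} := by
    ext ⟨x, y⟩
    simp only [mem_ofPred_eq, mem_Ioo, gt_iff_lt]
    exact and_congr_right fun hx => and_congr_right fun hy =>
      lt_div_sq_iff_lt_sqrt_mul_sqrt hM0 hx.1.le (add_pos (mul_pos (by linarith) hx.1) hy.1)
  rw [hset, volume_setOf_add_lt_mul_sqrt (Real.sqrt_nonneg _) (by linarith)
    ((Real.sqrt_le_one.2 hβM.le).trans hα.le) (by linarith),
    show √(β / M) ^ 4 = (√(β / M) ^ 2) ^ 2 by ring, ha2]
  field_simp
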